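/- arXiv:1608.00861 — 6 statements merged into one kernel-verified Lean document; each statement's English description precedes it below -/
import Mathlib

section
/- (Splitting property) For all real numbers x, y, z: B(x, y + z) = B(x + y, z) + B(x − z, y). -/
noncomputable def B (x y : ℝ) : ℝ := (Real.sign (x + y) - Real.sign (x - y)) / 2

theorem stmt_3 (x y z : ℝ) : B x (y + z) = B (x + y) z + B (x - z) y := by
  unfold B
  have h1 : x + (y + z) = x + y + z := by ring
  have h2 : x - (y + z) = x - z - y := by ring
  have h3 : x - z + y = x + y - z := by ring
  rw [h1, h2, h3]
  ring
end

section
/- Let U be a type, n a natural number, S : Fin n → Set U a collection of n sets, x ∈ U, and m a natural number. Then B(m + 1 − 2·Σ_{j=1}^{n} 1_{S(j)}(x), m) = 1 if the number k of indices j with x ∈ S(j) satisfies 1 ≤ k ≤ m (i.e., x belongs to at least one and to no more than m of the sets), and = 0 otherwise. Here 1_{S(j)} denotes the real-valued indicator function of S(j). -/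
open Classical in
theorem stmt_12 {U : Type*} (n : ℕ) (S : Fin n → Set U) (x : U) (m : ℕ) :
    B ((m : ℝ) + 1 - 2 * ∑ j, (S j).indicator (fun _ => (1 : ℝ)) x) (m : ℝ) =
      if 1 ≤ (Finset.univ.filter (fun j => x ∈ S j)).card ∧
          (Finset.univ.filter (fun j => x ∈ S j)).card ≤ m then 1 else 0 := by
  set k := (Finset.univ.filter (fun j => x ∈ S j)).card with hk
  have hsum : ∑ j, (S j).indicator (fun _ => (1 : ℝ)) x = (k : ℝ) := by
    rw [hk]
    rw [Finset.card_filter]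
    push_cast
    apply Finset.sum_congr rfl
    intro j _
    by_cases h : x ∈ S j <;> simp [Set.indicator, h]
  rw [hsum, B]
  have h1 : (m : ℝ) + 1 - 2 * k + m = 2 * m + 1 - 2 * k := by ring
  have h2 : (m : ℝ) + 1 - 2 * k - m = 1 - 2 * k := by ring
  rw [h1, h2]
  by_cases hk0 : 1 ≤ k
  · have hs2 : Real.sign (1 - 2 * k) = -1 := by
      apply Real.sign_of_neg
      have : (1 : ℝ) ≤ k := by exact_mod_cast hk0
      linarith
    by_cases hkm : k ≤ m
    · have hs1 : Real.sign (2 * m + 1 - 2 * k) = 1 := by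
        apply Real.sign_of_pos
        have : (k : ℝ) ≤ m := by exact_mod_cast hkm
        linarith
      rw [hs1, hs2, if_pos ⟨hk0, hkm⟩]; norm_num
    · have hs1 : Real.sign (2 * m + 1 - 2 * k) = -1 := by
        apply Real.sign_of_neg
        have : (m : ℝ) + 1 ≤ k := by exact_mod_cast Nat.succ_le_of_lt (Nat.lt_of_not_le hkm)
        linarith
      rw [hs1, hs2, if_neg (by tauto)]; norm_num
  · have hk0' : k = 0 := by omega
    rw [hk0']
    have hs1 : Real.sign (2 * m + 1 - 2 * (0:ℕ)) = 1 := by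
      apply Real.sign_of_pos; push_cast; linarith [Nat.cast_nonneg (α := ℝ) m]
    have hs2 : Real.sign (1 - 2 * (0:ℕ)) = 1 := by
      apply Real.sign_of_pos; norm_num
    rw [hs1, hs2, if_neg (by omega)]; norm_num
end

section
/- Let U be a type, n a natural number, S : Fin n → Set U a collection of n sets, x ∈ U, and m a natural number with m ≤ n. Then B(n + m + 1 − 2·Σ_{j=1}^{n} 1_{S(j)}(x), n − m) = 1 if the number of indices j with x ∈ S(j) is strictly greater than m (i.e., x belongs to more than m of the sets), and = 0 otherwise. Here 1_{S(j)} denotes the real-valued indicator function of S(j). -/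
open Classical in
theorem stmt_13 {U : Type*} (n : ℕ) (S : Fin n → Set U) (x : U) (m : ℕ) (hm : m ≤ n) :
    B ((n : ℝ) + m + 1 - 2 * ∑ j, (S j).indicator (fun _ => (1 : ℝ)) x) ((n : ℝ) - m) =
      if m < (Finset.univ.filter (fun j => x ∈ S j)).card then 1 else 0 := by
  set k := (Finset.univ.filter (fun j => x ∈ S j)).card with hk
  have hsum : ∑ j, (S j).indicator (fun _ => (1 : ℝ)) x = (k : ℝ) := by
    rw [hk]
    rw [Finset.card_filter]
    push_cast
    apply Finset.sum_congr rfl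
    intro j _
    by_cases h : x ∈ S j
    · simp [Set.indicator_of_mem h, h]
    · simp [Set.indicator_of_notMem h, h]
  rw [hsum]
  have hkn : k ≤ n := by
    calc k ≤ Finset.univ.card := Finset.card_filter_le _ _
    _ = n := Finset.card_univ.trans (Fintype.card_fin n)
  have h1 : (n : ℝ) + m + 1 - 2 * k + ((n : ℝ) - m) = 2 * ((n : ℝ) - k) + 1 := by ring
  have h2 : (n : ℝ) + m + 1 - 2 * k - ((n : ℝ) - m) = 2 * ((m : ℝ) - k) + 1 := by ring
  unfold B
  rw [h1, h2]
  have hs1 : Real.sign (2 * ((n : ℝ) - k) + 1) = 1 := by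
    apply Real.sign_of_pos
    have : (k : ℝ) ≤ n := by exact_mod_cast hkn
    nlinarith
  rw [hs1]
  by_cases h : m < k
  · rw [if_pos h]
    have : Real.sign (2 * ((m : ℝ) - k) + 1) = -1 := by
      apply Real.sign_of_neg
      have : (m : ℝ) + 1 ≤ k := by exact_mod_cast h
      nlinarith
    rw [this]; norm_num
  · rw [if_neg h]
    have : Real.sign (2 * ((m : ℝ) - k) + 1) = 1 := by
      apply Real.sign_of_pos
      have : (k : ℝ) ≤ m := by exact_mod_cast Nat.not_lt.mp h
      nlinarith
    rw [this]; norm_num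
end

section
/- Let U be a type, n a natural number, S : Fin n → Set U a collection of n sets, and x ∈ U. Then the real-valued indicator function of the union ⋃_{j=1}^{n} S(j) evaluated at x equals B(n + 1 − 2·Σ_{j=1}^{n} 1_{S(j)}(x), n). In particular, the characteristic function of a union of n sets is expressed using only the n individual indicator functions 1_{S(j)}. -/
theorem stmt_14 {U : Type*} (n : ℕ) (S : Fin n → Set U) (x : U) :
    (⋃ j, S j).indicator (fun _ => (1 : ℝ)) x =
      B ((n : ℝ) + 1 - 2 * ∑ j, (S j).indicator (fun _ => (1 : ℝ)) x) (n : ℝ) := by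
  set s : ℝ := ∑ j, (S j).indicator (fun _ => (1 : ℝ)) x with hs
  have hterm : ∀ j, (S j).indicator (fun _ => (1 : ℝ)) x ≤ 1 := by
    intro j
    by_cases h : x ∈ S j <;> simp [Set.indicator, h]
  have hterm0 : ∀ j, 0 ≤ (S j).indicator (fun _ => (1 : ℝ)) x := by
    intro j
    by_cases h : x ∈ S j <;> simp [Set.indicator, h]
  have hsle : s ≤ n := by
    calc s ≤ ∑ _j : Fin n, (1 : ℝ) := Finset.sum_le_sum fun j _ => hterm j
    _ = n := by simp
  have h1 : Real.sign ((n : ℝ) + 1 - 2 * s + n) = 1 := by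
    apply Real.sign_of_pos; linarith
  unfold B
  rw [h1]
  by_cases hx : x ∈ ⋃ j, S j
  · obtain ⟨j, hj⟩ := Set.mem_iUnion.mp hx
    have h2 : (1 : ℝ) ≤ s := by
      have : (S j).indicator (fun _ => (1 : ℝ)) x = 1 := by simp [Set.indicator, hj]
      calc (1:ℝ) = (S j).indicator (fun _ => (1 : ℝ)) x := this.symm
      _ ≤ s := Finset.single_le_sum (fun i _ => hterm0 i) (Finset.mem_univ j)
    have h3 : Real.sign ((n : ℝ) + 1 - 2 * s - n) = -1 := by
      apply Real.sign_of_neg; linarith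
    rw [h3]
    simp [Set.indicator, hx]
  · have h2 : s = 0 := by
      rw [hs]
      apply Finset.sum_eq_zero
      intro j _
      have : x ∉ S j := fun h => hx (Set.mem_iUnion.mpr ⟨j, h⟩)
      simp [Set.indicator, this]
    have h3 : Real.sign ((n : ℝ) + 1 - 2 * s - n) = 1 := by
      apply Real.sign_of_pos; linarith
    rw [h3]
    simp [Set.indicator, hx]
end

section
/- Let U be a type, n a natural number, S : Fin n → Set U a collection of n sets, x ∈ U, and m a natural number with m ≤ n. Writing k = Σ_{j=1}^{n} 1_{S(j)}(x), the indicator function of the union ⋃_{j=1}^{n} S(j) evaluated at x equals the sum B(m + 1 − 2k, m) + B(n + m + 1 − 2k, n − m); that is, the characteristic function of the union decomposes as the characteristic function of the elements belonging to at least one and at most m of the sets plus the characteristic function of the elements belonging to more than m of the sets. -/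
theorem stmt_16 {U : Type*} (n : ℕ) (S : Fin n → Set U) (x : U) (m : ℕ) (hm : m ≤ n) :
    (⋃ j, S j).indicator (fun _ => (1 : ℝ)) x =
      B ((m : ℝ) + 1 - 2 * ∑ j, (S j).indicator (fun _ => (1 : ℝ)) x) (m : ℝ) +
      B ((n : ℝ) + m + 1 - 2 * ∑ j, (S j).indicator (fun _ => (1 : ℝ)) x) ((n : ℝ) - m) := by
  classical
  set k := (Finset.univ.filter (fun j => x ∈ S j)).card with hk
  have hsum : ∑ j, (S j).indicator (fun _ => (1:ℝ)) x = (k : ℝ) := by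
    simp [Set.indicator_apply, hk]
  have hkn : k ≤ n := by
    calc k ≤ Finset.univ.card := Finset.card_filter_le _ _
    _ = n := by simp
  have hknR : (k : ℝ) ≤ (n : ℝ) := by exact_mod_cast hkn
  have hmR : (m : ℝ) ≤ (n : ℝ) := by exact_mod_cast hm
  have hmem : x ∈ ⋃ j, S j ↔ k ≠ 0 := by
    simp only [Set.mem_iUnion, hk, ne_eq, Finset.card_eq_zero,
      Finset.filter_eq_empty_iff, Finset.mem_univ, true_implies]
    push_neg
    rfl
  rw [hsum, B, B]
  by_cases h0 : k = 0
  · have hx : x ∉ ⋃ j, S j := by simp [hmem, h0]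
    rw [Set.indicator_of_notMem hx]
    have hk0 : (k : ℝ) = 0 := by exact_mod_cast h0
    have e1 : Real.sign ((m:ℝ) + 1 - 2 * (k:ℝ) + (m:ℝ)) = 1 :=
      Real.sign_of_pos (by rw [hk0]; nlinarith [Nat.cast_nonneg (α := ℝ) m])
    have e2 : Real.sign ((m:ℝ) + 1 - 2 * (k:ℝ) - (m:ℝ)) = 1 :=
      Real.sign_of_pos (by rw [hk0]; norm_num)
    have e3 : Real.sign ((n:ℝ) + (m:ℝ) + 1 - 2 * (k:ℝ) + ((n:ℝ) - (m:ℝ))) = 1 :=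
      Real.sign_of_pos (by rw [hk0]; nlinarith [Nat.cast_nonneg (α := ℝ) n])
    have e4 : Real.sign ((n:ℝ) + (m:ℝ) + 1 - 2 * (k:ℝ) - ((n:ℝ) - (m:ℝ))) = 1 :=
      Real.sign_of_pos (by rw [hk0]; nlinarith [Nat.cast_nonneg (α := ℝ) m])
    rw [e1, e2, e3, e4]; ring
  · have hx : x ∈ ⋃ j, S j := hmem.mpr h0
    rw [Set.indicator_of_mem hx]
    have h1 : 1 ≤ k := Nat.one_le_iff_ne_zero.mpr h0
    have h1R : (1 : ℝ) ≤ (k : ℝ) := by exact_mod_cast h1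
    have e2 : Real.sign ((m:ℝ) + 1 - 2 * (k:ℝ) - (m:ℝ)) = -1 :=
      Real.sign_of_neg (by linarith)
    have e3 : Real.sign ((n:ℝ) + (m:ℝ) + 1 - 2 * (k:ℝ) + ((n:ℝ) - (m:ℝ))) = 1 :=
      Real.sign_of_pos (by linarith)
    by_cases hkm : k ≤ m
    · have hkmR : (k : ℝ) ≤ (m : ℝ) := by exact_mod_cast hkm
      have e1 : Real.sign ((m:ℝ) + 1 - 2 * (k:ℝ) + (m:ℝ)) = 1 :=
        Real.sign_of_pos (by linarith)
      have e4 : Real.sign ((n:ℝ) + (m:ℝ) + 1 - 2 * (k:ℝ) - ((n:ℝ) - (m:ℝ))) = 1 :=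
        Real.sign_of_pos (by linarith)
      rw [e1, e2, e3, e4]; ring
    · have hkmR : (m : ℝ) + 1 ≤ (k : ℝ) := by
        exact_mod_cast Nat.succ_le_of_lt (Nat.lt_of_not_le hkm)
      have e1 : Real.sign ((m:ℝ) + 1 - 2 * (k:ℝ) + (m:ℝ)) = -1 :=
        Real.sign_of_neg (by linarith)
      have e4 : Real.sign ((n:ℝ) + (m:ℝ) + 1 - 2 * (k:ℝ) - ((n:ℝ) - (m:ℝ))) = -1 :=
        Real.sign_of_neg (by linarith)
      rw [e1, e2, e3, e4]; ring
end

section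
/- For every natural number x with x ≥ 2, B( Σ_{j=2}^{⌊x/2⌋} B(x mod j, 1/2), 1/2 ) = 1 if x is prime and = 0 otherwise, where x mod j denotes the remainder of dividing x by j (taken as a real number); that is, this expression is the characteristic function of the set of prime numbers (a number x ≥ 2 being prime exactly when it has no divisor j with 2 ≤ j ≤ ⌊x/2⌋). -/
/-!
`B x y` is `1` when `|x| < y` and `0` when `|y| < |x|`, so `B (x % j) (1/2)` detects `j ∣ x`
and the inner sum counts the divisors of `x` in `[2, x/2]`. The outer `B (·) (1/2)` then tests
whether this count vanishes, which happens exactly for primes since a proper divisor of `x`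
is at most `x / 2`.
-/

theorem B_eq_one_of_abs_lt {x y : ℝ} (h : |x| < y) : B x y = 1 := by
  obtain ⟨hlo, hhi⟩ := abs_lt.mp h
  rw [B, Real.sign_of_pos (by linarith), Real.sign_of_neg (by linarith)]
  norm_num

theorem B_eq_zero_of_abs_lt_abs {x y : ℝ} (h : |y| < |x|) : B x y = 0 := by
  rcases lt_or_ge x 0 with hx | hx
  · rw [abs_of_neg hx] at h
    obtain ⟨hlo, hhi⟩ := abs_lt.mp h
    rw [B, Real.sign_of_neg (by linarith), Real.sign_of_neg (by linarith)]
    norm_num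
  · rw [abs_of_nonneg hx] at h
    obtain ⟨hlo, hhi⟩ := abs_lt.mp h
    rw [B, Real.sign_of_pos (by linarith), Real.sign_of_pos (by linarith)]
    norm_num

theorem B_natCast_half (n : ℕ) : B n (1 / 2) = if n = 0 then 1 else 0 := by
  split_ifs with hn
  · subst hn
    exact B_eq_one_of_abs_lt (by norm_num)
  · have : (1 : ℝ) ≤ n := by exact_mod_cast Nat.one_le_iff_ne_zero.mpr hn
    exact B_eq_zero_of_abs_lt_abs (by rw [abs_of_pos (by norm_num), Nat.abs_cast]; linarith)

theorem Nat.le_div_two_of_dvd_of_lt {m n : ℕ} (hdvd : m ∣ n) (hlt : m < n) : m ≤ n / 2 := by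
  obtain ⟨k, rfl⟩ := hdvd
  have hk : 2 ≤ k := by
    by_contra! hk
    interval_cases k <;> simp at hlt
  exact (Nat.le_div_iff_mul_le two_pos).mpr (Nat.mul_le_mul_left m hk)

theorem Nat.prime_iff_forall_Icc_two_div_two_not_dvd {n : ℕ} (hn : 2 ≤ n) :
    n.Prime ↔ ∀ j ∈ Finset.Icc 2 (n / 2), ¬ j ∣ n := by
  rw [Nat.prime_def_lt', and_iff_right hn]
  refine ⟨fun h j hj => h j (Finset.mem_Icc.mp hj).1 (by grind), fun h m hm hlt hdvd => ?_⟩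
  exact h m (Finset.mem_Icc.mpr ⟨hm, Nat.le_div_two_of_dvd_of_lt hdvd hlt⟩) hdvd

theorem stmt_19 (x : ℕ) (hx : 2 ≤ x) :
    B (∑ j ∈ Finset.Icc 2 (x / 2), B ((x % j : ℕ) : ℝ) (1 / 2)) (1 / 2) =
      if Nat.Prime x then 1 else 0 := by
  have hsum : ∑ j ∈ Finset.Icc 2 (x / 2), B ((x % j : ℕ) : ℝ) (1 / 2) =
      (((Finset.Icc 2 (x / 2)).filter (· ∣ x)).card : ℝ) := by
    simp only [B_natCast_half, Finset.card_filter, Nat.cast_sum, Nat.cast_ite, Nat.cast_one,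
      Nat.cast_zero, Nat.dvd_iff_mod_eq_zero]
  have hcount : ((Finset.Icc 2 (x / 2)).filter (· ∣ x)).card = 0 ↔ x.Prime := by
    rw [Finset.card_eq_zero, Finset.filter_eq_empty_iff,
      Nat.prime_iff_forall_Icc_two_div_two_not_dvd hx]
  rw [hsum, B_natCast_half]
  exact if_congr hcount rfl rfl
end
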